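/- arXiv:2102.02837 — 6 statements merged into one kernel-verified Lean document; each statement's English description precedes it below -/
import Mathlib

section
/- The proximal map prox_{λf} is Lipschitz continuous with Lipschitz constant 1/(1 − λℓ): for all x, y ∈ ℝ^d, ‖prox_{λf}(x) − prox_{λf}(y)‖ ≤ (1/(1 − λℓ))‖x − y‖. -/
/-!
For each `x` the proximal objective `φₓ y = f y + ‖y - x‖² / (2λ)` is `(1/λ - ℓ)`-strongly convex,
so its minimizer `p = prox x` satisfies the quadratic growth bound
`φₓ(p) + (1/λ - ℓ)/2 ‖p - q‖² ≤ φₓ(q)`. Adding this bound at `(x, prox x, prox y)` and at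
`(y, prox y, prox x)`, the values of `f` cancel and the squared distances combine to
`(1 - λℓ) ‖prox x - prox y‖² ≤ ⟪prox x - prox y, x - y⟫`; Cauchy–Schwarz finishes.
-/

open Filter Topology RealInnerProductSpace

section NormedSpace

variable {E : Type*} [NormedAddCommGroup E] [NormedSpace ℝ E]

theorem StrongConvexOn.add_sq_norm_sub_le_of_isMinOn {s : Set E} {m : ℝ} {g : E → ℝ} {p q : E}
    (hg : StrongConvexOn s m g) (hmin : IsMinOn g s p) (hp : p ∈ s) (hq : q ∈ s) :
    g p + m / 2 * ‖p - q‖ ^ 2 ≤ g q := by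
  -- compare `g p` with the values of `g` at `(1 - t) • p + t • q` and let `t → 0⁺`
  have hsegment : ∀ t ∈ Set.Ioc (0 : ℝ) 1, g p + (1 - t) * (m / 2 * ‖p - q‖ ^ 2) ≤ g q := by
    rintro t ⟨ht0, ht1⟩
    have hconv := hg.2 hp hq (sub_nonneg.2 ht1) ht0.le (sub_add_cancel 1 t)
    have hle : g p ≤ g ((1 - t) • p + t • q) :=
      hmin (hg.1 hp hq (sub_nonneg.2 ht1) ht0.le (sub_add_cancel 1 t))
    simp only [smul_eq_mul] at hconv
    have : t * (g p + (1 - t) * (m / 2 * ‖p - q‖ ^ 2)) ≤ t * g q := by linarith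
    exact le_of_mul_le_mul_left this ht0
  have hlim : Tendsto (fun t : ℝ => g p + (1 - t) * (m / 2 * ‖p - q‖ ^ 2)) (𝓝[>] 0)
      (𝓝 (g p + m / 2 * ‖p - q‖ ^ 2)) := by
    have : Continuous fun t : ℝ => g p + (1 - t) * (m / 2 * ‖p - q‖ ^ 2) := by fun_prop
    simpa using (this.tendsto 0).mono_left nhdsWithin_le_nhds
  exact le_of_tendsto hlim (eventually_of_mem (Ioc_mem_nhdsGT one_pos) hsegment)

end NormedSpace

section InnerProductSpace

variable {E : Type*} [NormedAddCommGroup E] [InnerProductSpace ℝ E]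

theorem ConvexOn.strongConvexOn_add_sq_norm_sub {s : Set E} {f : E → ℝ} {ℓ : ℝ}
    (hf : ConvexOn ℝ s fun y => f y + ℓ / 2 * ‖y‖ ^ 2) (μ : ℝ) (x : E) :
    StrongConvexOn s (μ - ℓ) fun y => f y + μ / 2 * ‖y - x‖ ^ 2 := by
  rw [strongConvexOn_iff_convex]
  have haffine : ConvexOn ℝ s fun y => μ / 2 * ‖x‖ ^ 2 - μ * ⟪x, y⟫ :=
    (convexOn_const _ hf.1).sub ((μ • innerₗ E x).concaveOn hf.1)
  have hsplit : (fun y => f y + μ / 2 * ‖y - x‖ ^ 2 - (μ - ℓ) / 2 * ‖y‖ ^ 2) =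
      fun y => (f y + ℓ / 2 * ‖y‖ ^ 2) + (μ / 2 * ‖x‖ ^ 2 - μ * ⟪x, y⟫) := by
    funext y
    rw [norm_sub_sq_real, real_inner_comm]
    ring
  rw [hsplit]
  exact hf.add haffine

theorem norm_le_inv_mul_of_mul_sq_le_inner {a : ℝ} (ha : 0 < a) {u v : E}
    (h : a * ‖u‖ ^ 2 ≤ ⟪u, v⟫) : ‖u‖ ≤ a⁻¹ * ‖v‖ := by
  rw [le_inv_mul_iff₀ ha]
  rcases (norm_nonneg u).eq_or_lt with hu | hu
  · rw [← hu, mul_zero]; exact norm_nonneg v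
  · have : a * ‖u‖ * ‖u‖ ≤ ‖v‖ * ‖u‖ := by
      nlinarith [real_inner_le_norm u v]
    exact le_of_mul_le_mul_right this hu

theorem sub_mul_sq_norm_sub_le_inner_of_isMinOn {f : E → ℝ} {ℓ μ : ℝ}
    (hf : ConvexOn ℝ Set.univ fun z => f z + ℓ / 2 * ‖z‖ ^ 2) {x y p q : E}
    (hp : IsMinOn (fun z => f z + μ / 2 * ‖z - x‖ ^ 2) Set.univ p)
    (hq : IsMinOn (fun z => f z + μ / 2 * ‖z - y‖ ^ 2) Set.univ q) :
    (μ - ℓ) * ‖p - q‖ ^ 2 ≤ μ * ⟪p - q, x - y⟫ := by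
  have hpq := (hf.strongConvexOn_add_sq_norm_sub μ x).add_sq_norm_sub_le_of_isMinOn hp
    (Set.mem_univ p) (Set.mem_univ q)
  have hqp := (hf.strongConvexOn_add_sq_norm_sub μ y).add_sq_norm_sub_le_of_isMinOn hq
    (Set.mem_univ q) (Set.mem_univ p)
  have hcross : ‖q - x‖ ^ 2 + ‖p - y‖ ^ 2 - ‖p - x‖ ^ 2 - ‖q - y‖ ^ 2 = 2 * ⟪p - q, x - y⟫ := by
    simp only [norm_sub_sq_real, inner_sub_left, inner_sub_right, real_inner_comm]
    ring
  rw [norm_sub_rev q p] at hqp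
  linear_combination hpq + hqp + μ / 2 * hcross

end InnerProductSpace

theorem prox_map_lipschitz_general
    {d : ℕ}
    (f : EuclideanSpace ℝ (Fin d) → ℝ) (ℓ lam : ℝ)
    (hℓ : 0 < ℓ)
    (hwc : ConvexOn ℝ Set.univ (fun x => f x + ℓ / 2 * ‖x‖ ^ 2))
    (hlam : lam ∈ Set.Ioo (0 : ℝ) ℓ⁻¹)
    (prox : EuclideanSpace ℝ (Fin d) → EuclideanSpace ℝ (Fin d))
    (hprox : ∀ x y : EuclideanSpace ℝ (Fin d),
      f (prox x) + 1 / (2 * lam) * ‖prox x - x‖ ^ 2 ≤ f y + 1 / (2 * lam) * ‖y - x‖ ^ 2) :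
    ∀ x y : EuclideanSpace ℝ (Fin d),
      ‖prox x - prox y‖ ≤ 1 / (1 - lam * ℓ) * ‖x - y‖ := by
  intro x y
  obtain ⟨hlam0, hlamℓ⟩ := hlam
  have hgap : 0 < 1 - lam * ℓ := by
    have := mul_lt_mul_of_pos_right hlamℓ hℓ
    rw [inv_mul_cancel₀ hℓ.ne'] at this
    linarith
  have hmin (z : EuclideanSpace ℝ (Fin d)) :
      IsMinOn (fun w => f w + 1 / lam / 2 * ‖w - z‖ ^ 2) Set.univ (prox z) :=
    isMinOn_univ_iff.2 fun w => by simpa only [div_div, mul_comm lam] using hprox z w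
  have hinner : (1 - lam * ℓ) * ‖prox x - prox y‖ ^ 2 ≤ ⟪prox x - prox y, x - y⟫ :=
    calc (1 - lam * ℓ) * ‖prox x - prox y‖ ^ 2
        = lam * ((1 / lam - ℓ) * ‖prox x - prox y‖ ^ 2) := by field_simp
      _ ≤ lam * (1 / lam * ⟪prox x - prox y, x - y⟫) :=
        mul_le_mul_of_nonneg_left
          (sub_mul_sq_norm_sub_le_inner_of_isMinOn hwc (hmin x) (hmin y)) hlam0.le
      _ = ⟪prox x - prox y, x - y⟫ := by field_simp
  rw [one_div]
  exact norm_le_inv_mul_of_mul_sq_le_inner hgap hinner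

/-- The proximal map `prox_{λf}` is Lipschitz continuous with constant
`1/(1 − λℓ)`. -/
theorem prox_map_lipschitz
    {d : ℕ} (hd : 1 ≤ d)
    (f : EuclideanSpace ℝ (Fin d) → ℝ) (ℓ lam : ℝ)
    (hℓ : 0 < ℓ)
    (hlsc : LowerSemicontinuous f)
    (hwc : ConvexOn ℝ Set.univ (fun x => f x + ℓ / 2 * ‖x‖ ^ 2))
    (hlam : lam ∈ Set.Ioo (0 : ℝ) ℓ⁻¹)
    (prox : EuclideanSpace ℝ (Fin d) → EuclideanSpace ℝ (Fin d))
    (hprox : ∀ x y : EuclideanSpace ℝ (Fin d),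
      f (prox x) + 1 / (2 * lam) * ‖prox x - x‖ ^ 2 ≤ f y + 1 / (2 * lam) * ‖y - x‖ ^ 2) :
    ∀ x y : EuclideanSpace ℝ (Fin d),
      ‖prox x - prox y‖ ≤ 1 / (1 - lam * ℓ) * ‖x - y‖ :=
  prox_map_lipschitz_general f ℓ lam hℓ hwc hlam prox hprox
end

section
/- The gradient map ∇f_λ of the Moreau envelope is Lipschitz continuous with Lipschitz constant max{λ⁻¹, ℓ/(1 − λℓ)}: for all x, y ∈ ℝ^d, ‖∇f_λ(x) − ∇f_λ(y)‖ ≤ max{λ⁻¹, ℓ/(1 − λℓ)}·‖x − y‖. -/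
/-!
With `g = f + (ℓ/2)‖·‖²` convex, the first-order condition of the proximal subproblem says that
`ℓ p + λ⁻¹ (x - p)` is a subgradient of `g` at `p = prox x`. Monotonicity of the subdifferential
of `g` then gives `(1 - λℓ)‖p - q‖² ≤ ⟪x - y, p - q⟫` for `q = prox y`. With `u = x - y`,
`v = p - q` and `α = 1 - λℓ`, this puts `v` in the ball of radius `‖u‖/(2α)` about `u/(2α)`,
so the triangle inequality gives `‖u - v‖ ≤ max 1 ((1 - α)/α) * ‖u‖`, and multiplying by `λ⁻¹`
yields the constant `max λ⁻¹ (ℓ/(1 - λℓ))`.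
-/

open RealInnerProductSpace Set

section

variable {E : Type*} [NormedAddCommGroup E] [InnerProductSpace ℝ E]

theorem ConvexOn.neg_fderiv_le_sub_of_isMinOn_add {s : Set E} {g q : E → ℝ} {q' : E →L[ℝ] ℝ}
    {p z : E} (hg : ConvexOn ℝ s g) (hp : p ∈ s) (hz : z ∈ s) (hq : HasFDerivAt q q' p)
    (hmin : IsMinOn (g + q) s p) : -q' (z - p) ≤ g z - g p := by
  set w := z - p
  -- `χ ≥ χ 0` on `[0, 1]` by convexity of `g` on `[p, z]`, so its right derivative at `0` is `≥ 0`
  let χ : ℝ → ℝ := fun t => t * (g z - g p) + q (p + t • w)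
  have hχ : HasDerivAt χ ((g z - g p) + q' w) 0 := by
    have hline : HasDerivAt (fun t : ℝ => p + t • w) w 0 := by
      simpa using ((hasDerivAt_id (0 : ℝ)).smul_const w).const_add p
    have hq0 : HasFDerivAt q q' (p + (0 : ℝ) • w) := by simpa using hq
    simpa [χ, Function.comp_def] using
      ((hasDerivAt_id (0 : ℝ)).mul_const (g z - g p)).fun_add (hq0.comp_hasDerivAt 0 hline)
  have hχmin : IsMinOn χ (Icc 0 1) 0 := by
    intro t ⟨ht0, ht1⟩
    have hseg : p + t • w = (1 - t) • p + t • z := by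
      simp only [w, smul_sub, sub_smul, one_smul]; abel
    have hconv := hg.2 hp hz (sub_nonneg.2 ht1) ht0 (sub_add_cancel 1 t)
    have hle := hmin (hg.1 hp hz (sub_nonneg.2 ht1) ht0 (sub_add_cancel 1 t))
    simp only [mem_ofPred_eq, Pi.add_apply, smul_eq_mul] at hconv hle ⊢
    rw [← hseg] at hconv hle
    simp only [χ, zero_mul, zero_smul, add_zero, zero_add]
    linarith
  have hdir : (1 : ℝ) ∈ posTangentConeAt (Icc 0 1) 0 := by
    simpa using sub_mem_posTangentConeAt_of_segment_subset (segment_eq_Icc zero_le_one).subset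
  have hderiv := hχmin.localize.hasFDerivWithinAt_nonneg hχ.hasFDerivAt.hasFDerivWithinAt hdir
  simp only [ContinuousLinearMap.toSpanSingleton_apply, smul_eq_mul, one_mul] at hderiv
  linarith

theorem ConvexOn.inner_le_sub_of_isMinOn_prox {f : E → ℝ} {ℓ lam : ℝ} {x p : E}
    (hwc : ConvexOn ℝ univ (fun y => f y + ℓ / 2 * ‖y‖ ^ 2))
    (hp : IsMinOn (fun y => f y + 1 / (2 * lam) * ‖y - x‖ ^ 2) univ p) (z : E) :
    ⟪ℓ • p + lam⁻¹ • (x - p), z - p⟫ ≤ (f z + ℓ / 2 * ‖z‖ ^ 2) - (f p + ℓ / 2 * ‖p‖ ^ 2) := by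
  have hq : HasFDerivAt (fun y => 1 / (2 * lam) * ‖y - x‖ ^ 2 - ℓ / 2 * ‖y‖ ^ 2)
      ((1 / (2 * lam)) • (2 • innerSL ℝ (p - x)).comp (.id ℝ E) -
        (ℓ / 2) • (2 • innerSL ℝ p).comp (.id ℝ E)) p :=
    (((hasFDerivAt_id p).sub_const x).norm_sq.const_mul _).sub
      ((hasFDerivAt_id p).norm_sq.const_mul _)
  have hmin : IsMinOn ((fun y => f y + ℓ / 2 * ‖y‖ ^ 2) +
      fun y => 1 / (2 * lam) * ‖y - x‖ ^ 2 - ℓ / 2 * ‖y‖ ^ 2) univ p := by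
    convert hp using 2 with y
    simp only [Pi.add_apply]; ring
  convert hwc.neg_fderiv_le_sub_of_isMinOn_add (mem_univ p) (mem_univ z) hq hmin using 1
  simp only [sub_apply, smul_apply, ContinuousLinearMap.comp_apply,
    ContinuousLinearMap.id_apply, innerSL_apply_apply, inner_add_left, real_inner_smul_left,
    inner_sub_left, smul_eq_mul, nsmul_eq_mul]
  push_cast
  ring

theorem ConvexOn.mul_norm_sub_sq_le_inner_of_isMinOn_prox {f : E → ℝ} {ℓ lam : ℝ} {x y p q : E}
    (hwc : ConvexOn ℝ univ (fun y => f y + ℓ / 2 * ‖y‖ ^ 2)) (hlam : 0 < lam)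
    (hp : IsMinOn (fun z => f z + 1 / (2 * lam) * ‖z - x‖ ^ 2) univ p)
    (hq : IsMinOn (fun z => f z + 1 / (2 * lam) * ‖z - y‖ ^ 2) univ q) :
    (1 - lam * ℓ) * ‖p - q‖ ^ 2 ≤ ⟪x - y, p - q⟫ := by
  have hpq := hwc.inner_le_sub_of_isMinOn_prox hp q
  have hqp := hwc.inner_le_sub_of_isMinOn_prox hq p
  have hmono : 0 ≤ ⟪ℓ • (p - q) + lam⁻¹ • ((x - y) - (p - q)), p - q⟫ := by
    have hsplit : ℓ • (p - q) + lam⁻¹ • ((x - y) - (p - q)) =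
        (ℓ • p + lam⁻¹ • (x - p)) - (ℓ • q + lam⁻¹ • (y - q)) := by
      simp only [smul_sub]; abel
    rw [← neg_sub p q, inner_neg_right] at hpq
    rw [hsplit, inner_sub_left]
    linarith
  rw [inner_add_left, real_inner_smul_left, real_inner_smul_left, real_inner_self_eq_norm_sq,
    inner_sub_left, real_inner_self_eq_norm_sq] at hmono
  have hscaled := mul_nonneg hlam.le hmono
  rw [mul_add, mul_inv_cancel_left₀ hlam.ne'] at hscaled
  linarith

theorem norm_sub_le_max_mul_of_mul_norm_sq_le_inner {u v : E} {α : ℝ} (hα : 0 < α)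
    (h : α * ‖v‖ ^ 2 ≤ ⟪u, v⟫) : ‖u - v‖ ≤ max 1 ((1 - α) / α) * ‖u‖ := by
  set c := (2 * α)⁻¹ with hc
  have hc0 : 0 < c := by positivity
  have hball : ‖v - c • u‖ ≤ c * ‖u‖ := by
    refine (pow_le_pow_iff_left₀ (norm_nonneg _) (by positivity) two_ne_zero).1 ?_
    rw [norm_sub_sq_real, real_inner_smul_right, norm_smul, Real.norm_of_nonneg hc0.le,
      real_inner_comm]
    have : ‖v‖ ^ 2 ≤ 2 * c * ⟪u, v⟫ := by
      rw [show 2 * c = α⁻¹ by rw [hc]; field_simp, le_inv_mul_iff₀ hα]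
      exact h
    linarith
  have hconst : |1 - c| + c ≤ max 1 ((1 - α) / α) := by
    rcases le_total c 1 with hc1 | hc1
    · rw [abs_of_nonneg (sub_nonneg.2 hc1), sub_add_cancel]
      exact le_max_left _ _
    · rw [abs_of_nonpos (sub_nonpos.2 hc1)]
      refine le_max_of_le_right (le_of_eq ?_)
      rw [hc]; field_simp; ring
  calc ‖u - v‖ = ‖(1 - c) • u - (v - c • u)‖ := by
        congr 1; rw [sub_smul, one_smul]; abel
    _ ≤ |1 - c| * ‖u‖ + c * ‖u‖ := by
        rw [← Real.norm_eq_abs, ← norm_smul]; exact norm_sub_le_of_le le_rfl hball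
    _ ≤ max 1 ((1 - α) / α) * ‖u‖ := by
        rw [← add_mul]; exact mul_le_mul_of_nonneg_right hconst (norm_nonneg u)

end

theorem moreau_gradient_lipschitz_general
    {d : ℕ}
    (f : EuclideanSpace ℝ (Fin d) → ℝ) (ℓ lam : ℝ)
    (hℓ : 0 < ℓ)
    (hwc : ConvexOn ℝ Set.univ (fun x => f x + ℓ / 2 * ‖x‖ ^ 2))
    (hlam : lam ∈ Set.Ioo (0 : ℝ) ℓ⁻¹)
    (prox : EuclideanSpace ℝ (Fin d) → EuclideanSpace ℝ (Fin d))
    (hprox : ∀ x y : EuclideanSpace ℝ (Fin d),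
      f (prox x) + 1 / (2 * lam) * ‖prox x - x‖ ^ 2 ≤ f y + 1 / (2 * lam) * ‖y - x‖ ^ 2) :
    ∀ x y : EuclideanSpace ℝ (Fin d),
      ‖lam⁻¹ • (x - prox x) - lam⁻¹ • (y - prox y)‖ ≤
        max lam⁻¹ (ℓ / (1 - lam * ℓ)) * ‖x - y‖ := by
  intro x y
  obtain ⟨hlam0, hlamℓ⟩ := hlam
  have hα : 0 < 1 - lam * ℓ := sub_pos.2 ((lt_div_iff₀ hℓ).1 (by rwa [one_div]))
  have hprox_xy := hwc.mul_norm_sub_sq_le_inner_of_isMinOn_prox hlam0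
    (fun z _ => hprox x z) (fun z _ => hprox y z)
  calc ‖lam⁻¹ • (x - prox x) - lam⁻¹ • (y - prox y)‖
      = lam⁻¹ * ‖(x - y) - (prox x - prox y)‖ := by
        rw [← smul_sub, norm_smul, Real.norm_of_nonneg (inv_nonneg.2 hlam0.le)]
        congr 2; abel
    _ ≤ lam⁻¹ * (max 1 ((1 - (1 - lam * ℓ)) / (1 - lam * ℓ)) * ‖x - y‖) := by
        gcongr
        exact norm_sub_le_max_mul_of_mul_norm_sq_le_inner hα hprox_xy
    _ = max lam⁻¹ (ℓ / (1 - lam * ℓ)) * ‖x - y‖ := by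
        rw [← mul_assoc, mul_max_of_nonneg _ _ (inv_nonneg.2 hlam0.le), mul_one]
        congr 2
        field_simp
        ring

/-- The gradient map `∇f_λ(x) = λ⁻¹(x − prox_{λf}(x))` of the Moreau envelope
is Lipschitz continuous with constant `max{λ⁻¹, ℓ/(1 − λℓ)}`. -/
theorem moreau_gradient_lipschitz
    {d : ℕ} (hd : 1 ≤ d)
    (f : EuclideanSpace ℝ (Fin d) → ℝ) (ℓ lam : ℝ)
    (hℓ : 0 < ℓ)
    (hlsc : LowerSemicontinuous f)
    (hwc : ConvexOn ℝ Set.univ (fun x => f x + ℓ / 2 * ‖x‖ ^ 2))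
    (hlam : lam ∈ Set.Ioo (0 : ℝ) ℓ⁻¹)
    (prox : EuclideanSpace ℝ (Fin d) → EuclideanSpace ℝ (Fin d))
    (hprox : ∀ x y : EuclideanSpace ℝ (Fin d),
      f (prox x) + 1 / (2 * lam) * ‖prox x - x‖ ^ 2 ≤ f y + 1 / (2 * lam) * ‖y - x‖ ^ 2) :
    ∀ x y : EuclideanSpace ℝ (Fin d),
      ‖lam⁻¹ • (x - prox x) - lam⁻¹ • (y - prox y)‖ ≤
        max lam⁻¹ (ℓ / (1 - lam * ℓ)) * ‖x - y‖ :=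
  moreau_gradient_lipschitz_general f ℓ lam hℓ hwc hlam prox hprox
end

section
/- If x̄ ∈ ℝ^d is a local minimum of the Moreau envelope f_λ, then f_λ(x̄) = f(x̄) and x̄ is a local minimum of f. -/
/-! If `p = prox x̄ ≠ x̄`, moving `x̄` a small step towards `p` keeps `p` as a competitor in the
proximal subproblem while strictly shrinking the distance to it, so `f_λ` strictly decreases at
points arbitrarily close to `x̄`. Hence a local minimum `x̄` of `f_λ` is a fixed point of the
proximal map, `f_λ(x̄) = f(x̄)`, and near `x̄` we get `f ≥ f_λ ≥ f_λ(x̄) = f(x̄)`. -/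

open Filter Topology

section MoreauEnvelope

variable {E : Type*} [NormedAddCommGroup E] {f : E → ℝ} {lam : ℝ} {prox : E → E} {flam : E → ℝ}

theorem moreau_envelope_le
    (hprox : ∀ x y : E,
      f (prox x) + 1 / (2 * lam) * ‖prox x - x‖ ^ 2 ≤ f y + 1 / (2 * lam) * ‖y - x‖ ^ 2)
    (hflam : ∀ x, flam x = f (prox x) + 1 / (2 * lam) * ‖prox x - x‖ ^ 2) (x : E) :
    flam x ≤ f x := by
  simpa [hflam] using hprox x x

variable [NormedSpace ℝ E]

theorem moreau_envelope_lt_of_prox_ne (hlam : 0 < lam)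
    (hprox : ∀ x y : E,
      f (prox x) + 1 / (2 * lam) * ‖prox x - x‖ ^ 2 ≤ f y + 1 / (2 * lam) * ‖y - x‖ ^ 2)
    (hflam : ∀ x, flam x = f (prox x) + 1 / (2 * lam) * ‖prox x - x‖ ^ 2)
    {x : E} (hx : prox x ≠ x) {t : ℝ} (ht : t ∈ Set.Ioo 0 1) :
    flam (x + t • (prox x - x)) < flam x := by
  set r := ‖prox x - x‖
  have hr : 0 < r := norm_pos_iff.mpr (sub_ne_zero.mpr hx)
  have hdist : ‖prox x - (x + t • (prox x - x))‖ = (1 - t) * r := by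
    rw [show prox x - (x + t • (prox x - x)) = (1 - t) • (prox x - x) by module, norm_smul,
      Real.norm_of_nonneg (by linarith [ht.2])]
  have hshrink : ((1 - t) * r) ^ 2 < r ^ 2 :=
    pow_lt_pow_left₀ (by nlinarith [ht.1]) (by nlinarith [ht.2]) two_ne_zero
  calc flam (x + t • (prox x - x))
      ≤ f (prox x) + 1 / (2 * lam) * ((1 - t) * r) ^ 2 := by rw [hflam, ← hdist]; exact hprox _ _
    _ < f (prox x) + 1 / (2 * lam) * r ^ 2 := by gcongr
    _ = flam x := (hflam x).symm

theorem prox_eq_self_of_isLocalMin (hlam : 0 < lam)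
    (hprox : ∀ x y : E,
      f (prox x) + 1 / (2 * lam) * ‖prox x - x‖ ^ 2 ≤ f y + 1 / (2 * lam) * ‖y - x‖ ^ 2)
    (hflam : ∀ x, flam x = f (prox x) + 1 / (2 * lam) * ‖prox x - x‖ ^ 2)
    {x : E} (hmin : IsLocalMin flam x) : prox x = x := by
  by_contra hx
  have hsegment : Tendsto (fun t : ℝ => x + t • (prox x - x)) (𝓝[>] 0) (𝓝 x) := by
    have hcont : Continuous fun t : ℝ => x + t • (prox x - x) := by fun_prop
    simpa using (hcont.tendsto 0).mono_left nhdsWithin_le_nhds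
  obtain ⟨t, hle, ht⟩ := ((hsegment.eventually hmin).and (Ioo_mem_nhdsGT one_pos)).exists
  exact (moreau_envelope_lt_of_prox_ne hlam hprox hflam hx ht).not_ge hle

end MoreauEnvelope

theorem local_min_of_moreau_local_min_general
    {d : ℕ}
    (f : EuclideanSpace ℝ (Fin d) → ℝ) (ℓ lam : ℝ)
    (hlam : lam ∈ Set.Ioo (0 : ℝ) ℓ⁻¹)
    (prox : EuclideanSpace ℝ (Fin d) → EuclideanSpace ℝ (Fin d))
    (hprox : ∀ x y : EuclideanSpace ℝ (Fin d),
      f (prox x) + 1 / (2 * lam) * ‖prox x - x‖ ^ 2 ≤ f y + 1 / (2 * lam) * ‖y - x‖ ^ 2)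
    (flam : EuclideanSpace ℝ (Fin d) → ℝ)
    (hflam : ∀ x, flam x = f (prox x) + 1 / (2 * lam) * ‖prox x - x‖ ^ 2)
    (xbar : EuclideanSpace ℝ (Fin d))
    (hmin : IsLocalMin flam xbar) :
    flam xbar = f xbar ∧ IsLocalMin f xbar := by
  have hfixed : prox xbar = xbar := prox_eq_self_of_isLocalMin hlam.1 hprox hflam hmin
  have heq : flam xbar = f xbar := by simp [hflam, hfixed]
  refine ⟨heq, ?_⟩
  filter_upwards [hmin] with x hx
  exact heq ▸ hx.trans (moreau_envelope_le hprox hflam x)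

/-- If `x̄` is a local minimum of the Moreau envelope `f_λ`, then
`f_λ(x̄) = f(x̄)` and `x̄` is a local minimum of `f`. -/
theorem local_min_of_moreau_local_min
    {d : ℕ} (hd : 1 ≤ d)
    (f : EuclideanSpace ℝ (Fin d) → ℝ) (ℓ lam : ℝ)
    (hℓ : 0 < ℓ)
    (hlsc : LowerSemicontinuous f)
    (hwc : ConvexOn ℝ Set.univ (fun x => f x + ℓ / 2 * ‖x‖ ^ 2))
    (hlam : lam ∈ Set.Ioo (0 : ℝ) ℓ⁻¹)
    (prox : EuclideanSpace ℝ (Fin d) → EuclideanSpace ℝ (Fin d))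
    (hprox : ∀ x y : EuclideanSpace ℝ (Fin d),
      f (prox x) + 1 / (2 * lam) * ‖prox x - x‖ ^ 2 ≤ f y + 1 / (2 * lam) * ‖y - x‖ ^ 2)
    (flam : EuclideanSpace ℝ (Fin d) → ℝ)
    (hflam : ∀ x, flam x = f (prox x) + 1 / (2 * lam) * ‖prox x - x‖ ^ 2)
    (xbar : EuclideanSpace ℝ (Fin d))
    (hmin : IsLocalMin flam xbar) :
    flam xbar = f xbar ∧ IsLocalMin f xbar :=
  local_min_of_moreau_local_min_general f ℓ lam hlam prox hprox flam hflam xbar hmin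
end

section
/- Suppose for every x ∈ ℝ^d there exists a μ-weakly convex function f_x : ℝ^d → ℝ such that |f(y) − f_x(y)| ≤ (β/2)‖y − x‖² for all y ∈ ℝ^d. Then f is (β + μ)-weakly convex, i.e. x ↦ f(x) + ((β + μ)/2)‖x‖² is convex. -/
/-! Since `f ≥ f_z - (β/2)‖· - z‖²` with equality at `z`, the function `f + ((β + μ)/2)‖·‖²`
touches at every `z` the minorant `(f_z + (μ/2)‖·‖²) + (β/2)(‖·‖² - ‖· - z‖²)`, which is convex
because `‖y‖² - ‖y - z‖² = 2⟪z, y⟫ - ‖z‖²` is affine in `y`. A function touched from below at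
every point by a convex function is convex. -/

open Set

theorem ConvexOn.of_forall_convexOn_minorant {𝕜 E β : Type*} [Semiring 𝕜] [PartialOrder 𝕜]
    [AddCommMonoid E] [SMul 𝕜 E] [AddCommMonoid β] [PartialOrder β] [IsOrderedAddMonoid β]
    [Module 𝕜 β] [PosSMulMono 𝕜 β] {s : Set E} {g : E → β} (hs : Convex 𝕜 s)
    (hminorant : ∀ z ∈ s, ∃ m : E → β, ConvexOn 𝕜 s m ∧ (∀ y ∈ s, m y ≤ g y) ∧ m z = g z) :
    ConvexOn 𝕜 s g := by
  refine ⟨hs, fun x hx y hy a b ha hb hab => ?_⟩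
  obtain ⟨m, hm, hmg, hmz⟩ := hminorant (a • x + b • y) (hs hx hy ha hb hab)
  calc g (a • x + b • y) = m (a • x + b • y) := hmz.symm
    _ ≤ a • m x + b • m y := hm.2 hx hy ha hb hab
    _ ≤ a • g x + b • g y :=
      add_le_add (smul_le_smul_of_nonneg_left (hmg x hx) ha)
        (smul_le_smul_of_nonneg_left (hmg y hy) hb)

theorem convexOn_mul_norm_sq_sub_norm_sub_sq {E : Type*} [NormedAddCommGroup E]
    [InnerProductSpace ℝ E] (c : ℝ) (z : E) :
    ConvexOn ℝ univ fun y : E => c * (‖y‖ ^ 2 - ‖y - z‖ ^ 2) := by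
  have haffine : (fun y : E => c * (‖y‖ ^ 2 - ‖y - z‖ ^ 2)) =
      fun y => (2 * c) • innerₛₗ ℝ z y + -(c * ‖z‖ ^ 2) := by
    ext y
    rw [innerₛₗ_apply_apply, smul_eq_mul, norm_sub_sq_real, real_inner_comm]
    ring
  rw [haffine]
  exact (((2 * c) • innerₛₗ ℝ z).convexOn convex_univ).add_const _

theorem weakly_convex_of_model_approx_general
    {d : ℕ}
    (f : EuclideanSpace ℝ (Fin d) → ℝ) (β μ : ℝ)
    (hmodel : ∀ x : EuclideanSpace ℝ (Fin d),
      ∃ fx : EuclideanSpace ℝ (Fin d) → ℝ,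
        ConvexOn ℝ Set.univ (fun y => fx y + μ / 2 * ‖y‖ ^ 2) ∧
        ∀ y : EuclideanSpace ℝ (Fin d), |f y - fx y| ≤ β / 2 * ‖y - x‖ ^ 2) :
    ConvexOn ℝ Set.univ (fun x => f x + (β + μ) / 2 * ‖x‖ ^ 2) := by
  refine .of_forall_convexOn_minorant convex_univ fun z _ => ?_
  obtain ⟨fz, hconvex, happrox⟩ := hmodel z
  refine ⟨fun y => (fz y + μ / 2 * ‖y‖ ^ 2) + β / 2 * (‖y‖ ^ 2 - ‖y - z‖ ^ 2),
    hconvex.add (convexOn_mul_norm_sq_sub_norm_sub_sq (β / 2) z), fun y _ => ?_, ?_⟩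
  · linarith [neg_abs_le (f y - fz y), happrox y]
  · have hfz : f z = fz z := sub_eq_zero.mp (abs_nonpos_iff.mp (by simpa using happrox z))
    simp only [hfz, sub_self, norm_zero]
    ring

/-- If for every `x` there is a `μ`-weakly convex model `f_x` with
`|f(y) − f_x(y)| ≤ (β/2)‖y − x‖²` for all `y`, then `f` is `(β + μ)`-weakly convex. -/
theorem weakly_convex_of_model_approx
    {d : ℕ} (hd : 1 ≤ d)
    (f : EuclideanSpace ℝ (Fin d) → ℝ) (β μ : ℝ)
    (hβ : 0 < β) (hμ : 0 ≤ μ)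
    (hmodel : ∀ x : EuclideanSpace ℝ (Fin d),
      ∃ fx : EuclideanSpace ℝ (Fin d) → ℝ,
        ConvexOn ℝ Set.univ (fun y => fx y + μ / 2 * ‖y‖ ^ 2) ∧
        ∀ y : EuclideanSpace ℝ (Fin d), |f y - fx y| ≤ β / 2 * ‖y - x‖ ^ 2) :
    ConvexOn ℝ Set.univ (fun x => f x + (β + μ) / 2 * ‖x‖ ^ 2) :=
  weakly_convex_of_model_approx_general f β μ hmodel
end

section
/- Step-size bound: for every x ∈ ℝ^d, ‖S(x) − x‖² ≤ θ₁ η² ‖∇f_λ(x)‖², where η = 1/L and θ₁ = (L − λ⁻¹ + β)λ²L² / (L − λ⁻¹ − β). -/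
/-!
Compare the two minimizations at each other's minimizer: `S x` beats `prox x` in the model
subproblem and `prox x` beats `S x` in the Moreau subproblem. Since the model and `f` differ by
at most `β/2 ‖· - x‖²`, adding the two optimality inequalities cancels the function values and
leaves `(L - λ⁻¹ - β) ‖S x - x‖² ≤ (L - λ⁻¹ + β) ‖prox x - x‖²`. The choice of `λ` makes
`L - λ⁻¹ - β` positive, and `‖prox x - x‖ = λ ‖∇f_λ(x)‖`.
-/

lemma sq_norm_sub_le_of_model_argmin_of_prox_argmin {E : Type*} [SeminormedAddCommGroup E]
    (f model : E → ℝ) (β L lam : ℝ) (x p s : E)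
    (hclose : ∀ y, |f y - model y| ≤ β / 2 * ‖y - x‖ ^ 2)
    (hs : model s + L / 2 * ‖s - x‖ ^ 2 ≤ model p + L / 2 * ‖p - x‖ ^ 2)
    (hp : f p + 1 / (2 * lam) * ‖p - x‖ ^ 2 ≤ f s + 1 / (2 * lam) * ‖s - x‖ ^ 2) :
    (L - lam⁻¹ - β) * ‖s - x‖ ^ 2 ≤ (L - lam⁻¹ + β) * ‖p - x‖ ^ 2 := by
  have hhalf : 1 / (2 * lam) = lam⁻¹ / 2 := by rw [one_div, mul_inv, mul_comm, div_eq_mul_inv]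
  rw [hhalf] at hp
  obtain ⟨-, hs_close⟩ := abs_le.mp (hclose s)
  obtain ⟨hp_close, -⟩ := abs_le.mp (hclose p)
  linarith

lemma step_size_coeff_mul_sq_norm_smul {E : Type*} [SeminormedAddCommGroup E] [NormedSpace ℝ E]
    {lam L : ℝ} (hlam : lam ≠ 0) (hL : L ≠ 0) (A D : ℝ) (v : E) :
    A * lam ^ 2 * L ^ 2 / D * (1 / L) ^ 2 * ‖lam⁻¹ • v‖ ^ 2 = A / D * ‖v‖ ^ 2 := by
  rw [norm_smul, Real.norm_eq_abs, mul_pow, abs_inv, inv_pow, sq_abs]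
  field_simp

theorem prox_step_size_bound_general
    {d : ℕ}
    (f : EuclideanSpace ℝ (Fin d) → ℝ)
    (model : EuclideanSpace ℝ (Fin d) → EuclideanSpace ℝ (Fin d) → ℝ)
    (β μ L lam : ℝ)
    (hβ : 0 < β) (hμ : 0 ≤ μ)
    (hmodel_close : ∀ x y : EuclideanSpace ℝ (Fin d),
      |f y - model x y| ≤ β / 2 * ‖y - x‖ ^ 2)
    (hL : L > 7 / 2 * β + 3 * μ)
    (hlam : lam = (L / 2 + (β + 2 * μ) / 4)⁻¹)
    (prox : EuclideanSpace ℝ (Fin d) → EuclideanSpace ℝ (Fin d))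
    (hprox : ∀ x y : EuclideanSpace ℝ (Fin d),
      f (prox x) + 1 / (2 * lam) * ‖prox x - x‖ ^ 2 ≤ f y + 1 / (2 * lam) * ‖y - x‖ ^ 2)
    (S : EuclideanSpace ℝ (Fin d) → EuclideanSpace ℝ (Fin d))
    (hS : ∀ x y : EuclideanSpace ℝ (Fin d),
      model x (S x) + L / 2 * ‖S x - x‖ ^ 2 ≤ model x y + L / 2 * ‖y - x‖ ^ 2) :
    ∀ x : EuclideanSpace ℝ (Fin d),
      ‖S x - x‖ ^ 2 ≤
        ((L - lam⁻¹ + β) * lam ^ 2 * L ^ 2 / (L - lam⁻¹ - β)) * (1 / L) ^ 2 *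
          ‖lam⁻¹ • (x - prox x)‖ ^ 2 := by
  intro x
  have hlam_inv : lam⁻¹ = L / 2 + (β + 2 * μ) / 4 := by rw [hlam, inv_inv]
  have hlam_ne : lam ≠ 0 := by
    rintro rfl
    rw [inv_zero] at hlam_inv
    linarith
  have hgap : 0 < L - lam⁻¹ - β := by rw [hlam_inv]; linarith
  rw [step_size_coeff_mul_sq_norm_smul hlam_ne (by linarith), norm_sub_rev x,
    div_mul_eq_mul_div, le_div_iff₀ hgap, mul_comm]
  exact sq_norm_sub_le_of_model_argmin_of_prox_argmin f (model x) β L lam x (prox x) (S x)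
    (hmodel_close x) (hS x (prox x)) (hprox x (S x))

/-- Step-size bound: for every `x`,
`‖S(x) − x‖² ≤ θ₁ η² ‖∇f_λ(x)‖²`, where `η = 1/L` and
`θ₁ = (L − λ⁻¹ + β)λ²L²/(L − λ⁻¹ − β)`, and `∇f_λ(x) = λ⁻¹(x − prox_{λf}(x))`. -/
theorem prox_step_size_bound
    {d : ℕ} (hd : 1 ≤ d)
    (f : EuclideanSpace ℝ (Fin d) → ℝ)
    (model : EuclideanSpace ℝ (Fin d) → EuclideanSpace ℝ (Fin d) → ℝ)
    (β μ L lam : ℝ)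
    (hβ : 0 < β) (hμ : 0 ≤ μ)
    (hlsc : LowerSemicontinuous f)
    (hmodel_lsc : ∀ x, LowerSemicontinuous (model x))
    (hmodel_wc : ∀ x, ConvexOn ℝ Set.univ (fun y => model x y + μ / 2 * ‖y‖ ^ 2))
    (hmodel_close : ∀ x y : EuclideanSpace ℝ (Fin d),
      |f y - model x y| ≤ β / 2 * ‖y - x‖ ^ 2)
    (hL : L > 7 / 2 * β + 3 * μ)
    (hlam : lam = (L / 2 + (β + 2 * μ) / 4)⁻¹)
    (prox : EuclideanSpace ℝ (Fin d) → EuclideanSpace ℝ (Fin d))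
    (hprox : ∀ x y : EuclideanSpace ℝ (Fin d),
      f (prox x) + 1 / (2 * lam) * ‖prox x - x‖ ^ 2 ≤ f y + 1 / (2 * lam) * ‖y - x‖ ^ 2)
    (S : EuclideanSpace ℝ (Fin d) → EuclideanSpace ℝ (Fin d))
    (hS : ∀ x y : EuclideanSpace ℝ (Fin d),
      model x (S x) + L / 2 * ‖S x - x‖ ^ 2 ≤ model x y + L / 2 * ‖y - x‖ ^ 2)
    (flam : EuclideanSpace ℝ (Fin d) → ℝ)
    (hflam : ∀ x, flam x = f (prox x) + 1 / (2 * lam) * ‖prox x - x‖ ^ 2) :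
    ∀ x : EuclideanSpace ℝ (Fin d),
      ‖S x - x‖ ^ 2 ≤
        ((L - lam⁻¹ + β) * lam ^ 2 * L ^ 2 / (L - lam⁻¹ - β)) * (1 / L) ^ 2 *
          ‖lam⁻¹ • (x - prox x)‖ ^ 2 :=
  prox_step_size_bound_general f model β μ L lam hβ hμ hmodel_close hL hlam prox hprox S hS
end

section
/- Sufficient decrease of the Moreau envelope: for every x ∈ ℝ^d, f_λ(S(x)) ≤ f_λ(x) − (θ₂/(2L)) ‖∇f_λ(x)‖², where θ₂ = (L − λ⁻¹ − β)λL / (L + λ⁻¹ − β − 2μ) > 0. -/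
/-!
Since `f` stays within `β/2 ‖y - x‖²` of a `μ`-weakly convex model around every `x`, `f` is
`(β + μ)`-weakly convex, so both the proximal subproblem of `f` (modulus `λ⁻¹ - β - μ`) and the model
subproblem defining `S x` (modulus `L - μ`) are strongly convex, and their minimizers enjoy quadratic
growth. Testing each growth inequality at the other problem's minimizer and adding them bounds
`‖S x - prox x‖²` by `(1 - θ₂ / (λ L)) ‖prox x - x‖²`. Using `prox x` as a competitor in the envelope
at `S x` then gives the decrease.
-/

open Set Filter Topology

section StrongConvexity

variable {E : Type*} [NormedAddCommGroup E]

nonrec lemma StrongConvexOn.add [NormedSpace ℝ E] {s : Set E} {m n : ℝ} {f g : E → ℝ}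
    (hf : StrongConvexOn s m f) (hg : StrongConvexOn s n g) : StrongConvexOn s (m + n) (f + g) :=
  (hf.add hg).mono fun r => le_of_eq <| by simp only [Pi.add_apply]; ring

lemma StrongConvexOn.add_sq_le_of_isMinOn [NormedSpace ℝ E] {s : Set E} {m : ℝ} {ψ : E → ℝ}
    {a y : E} (hψ : StrongConvexOn s m ψ) (hmin : IsMinOn ψ s a) (ha : a ∈ s) (hy : y ∈ s) :
    ψ a + m / 2 * ‖y - a‖ ^ 2 ≤ ψ y := by
  obtain ⟨c, hc⟩ : ∃ c, c = m / 2 * ‖y - a‖ ^ 2 := ⟨_, rfl⟩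
  -- Comparing `ψ a` with `ψ (t • y + (1 - t) • a)` gives the bound up to a factor `1 - t`.
  have h_approx : ∀ t ∈ Ioo (0 : ℝ) 1, ψ a + (1 - t) * c ≤ ψ y := by
    rintro t ⟨ht₀, ht₁⟩
    have h_conv := hψ.2 hy ha ht₀.le (sub_nonneg.2 ht₁.le) (add_sub_cancel t 1)
    have h_min : ψ a ≤ ψ (t • y + (1 - t) • a) :=
      hmin (hψ.1 hy ha ht₀.le (sub_nonneg.2 ht₁.le) (add_sub_cancel t 1))
    simp only [smul_eq_mul, ← hc] at h_conv
    refine le_of_mul_le_mul_left ?_ ht₀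
    linarith
  have h_lim : Tendsto (fun t : ℝ => ψ a + (1 - t) * c) (𝓝[>] 0) (𝓝 (ψ a + (1 - 0) * c)) :=
    ((continuous_const.add ((continuous_const.sub continuous_id).mul continuous_const)).tendsto
      0).mono_left nhdsWithin_le_nhds
  rw [sub_zero, one_mul] at h_lim
  exact hc ▸ le_of_tendsto h_lim (eventually_of_mem (Ioo_mem_nhdsGT one_pos) h_approx)

variable [InnerProductSpace ℝ E]

lemma strongConvexOn_univ_sq_norm_sub (c : ℝ) (x : E) :
    StrongConvexOn univ c (fun y => c / 2 * ‖y - x‖ ^ 2) := by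
  rw [strongConvexOn_iff_convex]
  have h_affine : (fun y => c / 2 * ‖y - x‖ ^ 2 - c / 2 * ‖y‖ ^ 2)
      = fun y => (-c) • innerₗ E x y + c / 2 * ‖x‖ ^ 2 := by
    ext y; rw [norm_sub_sq_real, innerₗ_apply_apply, real_inner_comm, smul_eq_mul]; ring
  rw [h_affine]
  exact (((-c) • innerₗ E x).convexOn convex_univ).add_const _

lemma strongConvexOn_neg_iff_convexOn_add_sq {s : Set E} {μ : ℝ} {g : E → ℝ} :
    StrongConvexOn s (-μ) g ↔ ConvexOn ℝ s (fun y => g y + μ / 2 * ‖y‖ ^ 2) := by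
  simp only [strongConvexOn_iff_convex, neg_div, neg_mul, sub_neg_eq_add]

end StrongConvexity

section ModelFunctions

variable {E : Type*} [NormedAddCommGroup E] [InnerProductSpace ℝ E]
  {f : E → ℝ} {model : E → E → ℝ} {β μ : ℝ}

lemma strongConvexOn_of_abs_sub_model_le (hwc : ∀ x, StrongConvexOn univ (-μ) (model x))
    (hclose : ∀ x y, |f y - model x y| ≤ β / 2 * ‖y - x‖ ^ 2) :
    StrongConvexOn univ (-(β + μ)) f := by
  refine ⟨convex_univ, fun y _ z _ a b ha hb hab => ?_⟩
  -- Use the model centred at the convex combination `w` itself, where it agrees with `f`.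
  set w := a • y + b • z
  have h_center : f w = model w w := by
    simpa [sub_eq_zero] using hclose w w
  have h_dist_y : ‖y - w‖ = b * ‖y - z‖ := by
    rw [show y - w = b • (y - z) by linear_combination (norm := module) (-hab) • y, norm_smul,
      Real.norm_of_nonneg hb]
  have h_dist_z : ‖z - w‖ = a * ‖y - z‖ := by
    rw [show z - w = a • (z - y) by linear_combination (norm := module) (-hab) • z, norm_smul,
      Real.norm_of_nonneg ha, norm_sub_rev]
  have h_y := (abs_le.1 (hclose w y)).1
  have h_z := (abs_le.1 (hclose w z)).1
  have h_conv : model w w ≤ _ := (hwc w).2 (mem_univ y) (mem_univ z) ha hb hab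
  rw [h_dist_y] at h_y
  rw [h_dist_z] at h_z
  simp only [smul_eq_mul] at h_conv ⊢
  obtain rfl : a = 1 - b := eq_sub_of_add_eq hab
  linarith [mul_le_mul_of_nonneg_left h_y ha, mul_le_mul_of_nonneg_left h_z hb]

lemma sq_norm_sub_le_of_isMinOn_prox_model (hwc : ∀ x, StrongConvexOn univ (-μ) (model x))
    (hclose : ∀ x y, |f y - model x y| ≤ β / 2 * ‖y - x‖ ^ 2) {R L : ℝ} {x p s : E}
    (hp : IsMinOn (fun y => f y + R / 2 * ‖y - x‖ ^ 2) univ p)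
    (hs : IsMinOn (fun y => model x y + L / 2 * ‖y - x‖ ^ 2) univ s) :
    (L + R - β - 2 * μ) * ‖s - p‖ ^ 2 ≤ (L - R + β) * ‖p - x‖ ^ 2 - (L - R - β) * ‖s - x‖ ^ 2 := by
  have h_model := ((hwc x).add (strongConvexOn_univ_sq_norm_sub L x)).add_sq_le_of_isMinOn hs
    (mem_univ s) (mem_univ p)
  have h_prox := ((strongConvexOn_of_abs_sub_model_le hwc hclose).add
    (strongConvexOn_univ_sq_norm_sub R x)).add_sq_le_of_isMinOn hp (mem_univ p) (mem_univ s)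
  have h_close_p := (abs_le.1 (hclose x p)).1
  have h_close_s := (abs_le.1 (hclose x s)).2
  simp only [Pi.add_apply] at h_model h_prox
  rw [norm_sub_rev p s] at h_model
  linarith

end ModelFunctions

theorem moreau_sufficient_decrease_general
    {d : ℕ}
    (f : EuclideanSpace ℝ (Fin d) → ℝ)
    (model : EuclideanSpace ℝ (Fin d) → EuclideanSpace ℝ (Fin d) → ℝ)
    (β μ L lam : ℝ)
    (hβ : 0 < β) (hμ : 0 ≤ μ)
    (hmodel_wc : ∀ x, ConvexOn ℝ Set.univ (fun y => model x y + μ / 2 * ‖y‖ ^ 2))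
    (hmodel_close : ∀ x y : EuclideanSpace ℝ (Fin d),
      |f y - model x y| ≤ β / 2 * ‖y - x‖ ^ 2)
    (hL : L > 7 / 2 * β + 3 * μ)
    (hlam : lam = (L / 2 + (β + 2 * μ) / 4)⁻¹)
    (prox : EuclideanSpace ℝ (Fin d) → EuclideanSpace ℝ (Fin d))
    (hprox : ∀ x y : EuclideanSpace ℝ (Fin d),
      f (prox x) + 1 / (2 * lam) * ‖prox x - x‖ ^ 2 ≤ f y + 1 / (2 * lam) * ‖y - x‖ ^ 2)
    (S : EuclideanSpace ℝ (Fin d) → EuclideanSpace ℝ (Fin d))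
    (hS : ∀ x y : EuclideanSpace ℝ (Fin d),
      model x (S x) + L / 2 * ‖S x - x‖ ^ 2 ≤ model x y + L / 2 * ‖y - x‖ ^ 2)
    (flam : EuclideanSpace ℝ (Fin d) → ℝ)
    (hflam : ∀ x, flam x = f (prox x) + 1 / (2 * lam) * ‖prox x - x‖ ^ 2) :
    (L - lam⁻¹ - β) * lam * L / (L + lam⁻¹ - β - 2 * μ) > 0 ∧
    ∀ x : EuclideanSpace ℝ (Fin d),
      flam (S x) ≤
        flam x -
          ((L - lam⁻¹ - β) * lam * L / (L + lam⁻¹ - β - 2 * μ)) / (2 * L) *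
            ‖lam⁻¹ • (x - prox x)‖ ^ 2 := by
  have h_inv : lam⁻¹ = L / 2 + (β + 2 * μ) / 4 := by rw [hlam, inv_inv]
  have hL₀ : 0 < L := by linarith
  have h_inv₀ : 0 < lam⁻¹ := by linarith
  have hK : 0 < L - lam⁻¹ - β := by linarith
  have hD : 0 < L + lam⁻¹ - β - 2 * μ := by linarith
  refine ⟨div_pos (mul_pos (mul_pos hK (inv_pos.1 h_inv₀)) hL₀) hD, fun x => ?_⟩
  rw [show 1 / (2 * lam) = lam⁻¹ / 2 by ring] at hprox hflam
  have h_sq := sq_norm_sub_le_of_isMinOn_prox_model (strongConvexOn_neg_iff_convexOn_add_sq.2 <| hmodel_wc ·)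
    hmodel_close (fun y _ => hprox x y) (fun y _ => hS x y)
  have h_dist : ‖S x - prox x‖ ^ 2
      ≤ (1 - (L - lam⁻¹ - β) / (L + lam⁻¹ - β - 2 * μ)) * ‖prox x - x‖ ^ 2 := by
    have h_coef : L - lam⁻¹ + β ≤ (L + lam⁻¹ - β - 2 * μ) - (L - lam⁻¹ - β) := by linarith
    rw [one_sub_div hD.ne', div_mul_eq_mul_div, le_div_iff₀ hD]
    linarith [mul_le_mul_of_nonneg_right h_coef (sq_nonneg ‖prox x - x‖),
      mul_nonneg hK.le (sq_nonneg ‖S x - x‖)]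
  have h_env := hprox (S x) (prox x)
  rw [← hflam, norm_sub_rev] at h_env
  have h_grad : ‖lam⁻¹ • (x - prox x)‖ ^ 2 = lam⁻¹ ^ 2 * ‖prox x - x‖ ^ 2 := by
    rw [norm_smul, norm_sub_rev, mul_pow, Real.norm_eq_abs, sq_abs]
  have h_θ : (L - lam⁻¹ - β) * lam * L / (L + lam⁻¹ - β - 2 * μ) / (2 * L) * lam⁻¹ ^ 2
      = lam⁻¹ / 2 * ((L - lam⁻¹ - β) / (L + lam⁻¹ - β - 2 * μ)) := by
    field_simp
  rw [h_grad, ← mul_assoc, h_θ, hflam x]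
  linarith [mul_le_mul_of_nonneg_left h_dist (half_pos h_inv₀).le]

/-- Sufficient decrease of the Moreau envelope: for every `x`,
`f_λ(S(x)) ≤ f_λ(x) − (θ₂/(2L))‖∇f_λ(x)‖²`, where
`θ₂ = (L − λ⁻¹ − β)λL/(L + λ⁻¹ − β − 2μ) > 0` and `∇f_λ(x) = λ⁻¹(x − prox_{λf}(x))`. -/
theorem moreau_sufficient_decrease
    {d : ℕ} (hd : 1 ≤ d)
    (f : EuclideanSpace ℝ (Fin d) → ℝ)
    (model : EuclideanSpace ℝ (Fin d) → EuclideanSpace ℝ (Fin d) → ℝ)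
    (β μ L lam : ℝ)
    (hβ : 0 < β) (hμ : 0 ≤ μ)
    (hlsc : LowerSemicontinuous f)
    (hmodel_lsc : ∀ x, LowerSemicontinuous (model x))
    (hmodel_wc : ∀ x, ConvexOn ℝ Set.univ (fun y => model x y + μ / 2 * ‖y‖ ^ 2))
    (hmodel_close : ∀ x y : EuclideanSpace ℝ (Fin d),
      |f y - model x y| ≤ β / 2 * ‖y - x‖ ^ 2)
    (hL : L > 7 / 2 * β + 3 * μ)
    (hlam : lam = (L / 2 + (β + 2 * μ) / 4)⁻¹)
    (prox : EuclideanSpace ℝ (Fin d) → EuclideanSpace ℝ (Fin d))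
    (hprox : ∀ x y : EuclideanSpace ℝ (Fin d),
      f (prox x) + 1 / (2 * lam) * ‖prox x - x‖ ^ 2 ≤ f y + 1 / (2 * lam) * ‖y - x‖ ^ 2)
    (S : EuclideanSpace ℝ (Fin d) → EuclideanSpace ℝ (Fin d))
    (hS : ∀ x y : EuclideanSpace ℝ (Fin d),
      model x (S x) + L / 2 * ‖S x - x‖ ^ 2 ≤ model x y + L / 2 * ‖y - x‖ ^ 2)
    (flam : EuclideanSpace ℝ (Fin d) → ℝ)
    (hflam : ∀ x, flam x = f (prox x) + 1 / (2 * lam) * ‖prox x - x‖ ^ 2) :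
    (L - lam⁻¹ - β) * lam * L / (L + lam⁻¹ - β - 2 * μ) > 0 ∧
    ∀ x : EuclideanSpace ℝ (Fin d),
      flam (S x) ≤
        flam x -
          ((L - lam⁻¹ - β) * lam * L / (L + lam⁻¹ - β - 2 * μ)) / (2 * L) *
            ‖lam⁻¹ • (x - prox x)‖ ^ 2 :=
  moreau_sufficient_decrease_general f model β μ L lam hβ hμ hmodel_wc hmodel_close hL hlam prox
    hprox S hS flam hflam
end
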